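/- arXiv:2407.15547 — 2 statements merged into one kernel-verified Lean document; each statement's English description precedes it below -/
import Mathlib

section
/- Let α < 0 and r > 0, and let τ ∈ V_{α,r} with τ(0) = τ'(0) = 0, with associated extension F. For every ε > 0 there exists g ∈ C¹[0,∞) with g'(x) → 0 as x → ∞, g(0) = g'(0) = 0, such that L{g;·} has an analytic extension G to an open neighborhood Ω of R̄_{α,r}, and sup_{x≥0}|τ'(x) − g'(x)| + sup_{s∈R̄_{α,r}} |F(s) − G(s)| ≤ ε. Moreover one can take g(x) = τ((1+λ)x) for all sufficiently small λ > 0. -/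
open Filter Set MeasureTheory

/-- The Laplace transform `L{f;s} = ∫_0^∞ f(x) e^{-sx} dx`. -/
noncomputable def Laplace (f : ℝ → ℂ) (s : ℂ) : ℂ :=
  ∫ x in Set.Ioi (0 : ℝ), f x * Complex.exp (-(s * (x : ℂ)))

/-- The closed rectangle `R̄_{α,r} = {s : α ≤ Re s ≤ 1, |Im s| ≤ r}`. -/
def Rbar (α r : ℝ) : Set ℂ := {s : ℂ | α ≤ s.re ∧ s.re ≤ 1 ∧ |s.im| ≤ r}

/-- The open rectangle `R_{α,r} = {s : α < Re s < 1, |Im s| < r}`. -/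
def Ropen (α r : ℝ) : Set ℂ := {s : ℂ | α < s.re ∧ s.re < 1 ∧ |s.im| < r}

/-! The dilates `g = τ((1+λ)·)` work because `L{g;s} = (1+λ)⁻¹ F(s/(1+λ))` extends
holomorphically to the dilated open rectangle `(1+λ) R_{α,r}`, which contains `R̄_{α,r}` since
`α < 0 < r`. Both error terms tend to `0` as `λ → 0⁺`: on the compact rectangle by uniform
continuity of `(t, s) ↦ t F(t s)` (the rectangle is star-shaped about `0`), and for
`g' = (1+λ) τ'((1+λ)·)` by uniform continuity on a compact interval `[0, 2X]` together with
`τ' → 0` beyond `X`. -/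

open Topology

theorem Rbar_eq_reProdIm (α r : ℝ) : Rbar α r = Icc α 1 ×ℂ Icc (-r) r := by
  ext s
  simp only [Rbar, Complex.mem_reProdIm, mem_ofPred_eq, mem_Icc, abs_le]
  tauto

theorem Ropen_eq_reProdIm (α r : ℝ) : Ropen α r = Ioo α 1 ×ℂ Ioo (-r) r := by
  ext s
  simp only [Ropen, Complex.mem_reProdIm, mem_ofPred_eq, mem_Ioo, abs_lt]
  tauto

theorem isCompact_Rbar (α r : ℝ) : IsCompact (Rbar α r) := by
  rw [Rbar_eq_reProdIm]
  exact isCompact_Icc.reProdIm isCompact_Icc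

theorem isOpen_Ropen (α r : ℝ) : IsOpen (Ropen α r) := by
  rw [Ropen_eq_reProdIm]
  exact isOpen_Ioo.reProdIm isOpen_Ioo

theorem Ropen_subset_Rbar (α r : ℝ) : Ropen α r ⊆ Rbar α r :=
  fun _ ⟨h₁, h₂, h₃⟩ => ⟨h₁.le, h₂.le, h₃.le⟩

theorem starConvex_Rbar {α r : ℝ} (hα : α ≤ 0) : StarConvex ℝ 0 (Rbar α r) := by
  refine starConvex_zero_iff.2 fun s ⟨hre₁, hre₂, him⟩ t ht₀ ht₁ => ⟨?_, ?_, ?_⟩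
  · rw [Complex.smul_re, smul_eq_mul]; nlinarith
  · rw [Complex.smul_re, smul_eq_mul]; nlinarith
  · rw [Complex.smul_im, smul_eq_mul, abs_mul, abs_of_nonneg ht₀]; nlinarith [abs_nonneg s.im]

theorem smul_mem_Ropen_of_mem_Rbar {α r t : ℝ} {s : ℂ} (hα : α < 0) (hr : 0 < r)
    (ht₀ : 0 ≤ t) (ht₁ : t < 1) (hs : s ∈ Rbar α r) : t • s ∈ Ropen α r := by
  obtain ⟨hre₁, hre₂, him⟩ := hs
  refine ⟨?_, ?_, ?_⟩
  · rw [Complex.smul_re, smul_eq_mul]; nlinarith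
  · rw [Complex.smul_re, smul_eq_mul]; nlinarith
  · rw [Complex.smul_im, smul_eq_mul, abs_mul, abs_of_nonneg ht₀]; nlinarith [abs_nonneg s.im]

theorem laplace_comp_mul (τ : ℝ → ℂ) {c : ℝ} (hc : 0 < c) (s : ℂ) :
    Laplace (fun y => τ (c * y)) s = c⁻¹ • Laplace τ (c⁻¹ • s) := by
  have h := integral_comp_mul_left_Ioi
    (fun u : ℝ => τ u * Complex.exp (-((c⁻¹ • s) * u))) 0 hc
  rw [mul_zero] at h
  rw [Laplace, Laplace, ← h]
  congr with x
  have hc' : (c : ℂ) ≠ 0 := by exact_mod_cast hc.ne'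
  rw [Complex.real_smul]
  push_cast
  field_simp

section Dilation

variable {E : Type*} [NormedAddCommGroup E] [NormedSpace ℝ E]

theorem HasDerivWithinAt.comp_const_mul_Ici
    {f : ℝ → E} {f' : E} {c x : ℝ} (hc : 0 ≤ c) (hf : HasDerivWithinAt f f' (Ici 0) (c * x)) :
    HasDerivWithinAt (fun y => f (c * y)) (c • f') (Ici 0) x := by
  have hmaps : MapsTo (c * ·) (Ici (0 : ℝ)) (Ici 0) := fun _ hy => mul_nonneg hc hy
  simpa [Function.comp_def] using hf.scomp x ((hasDerivAt_id x).const_mul c).hasDerivWithinAt hmaps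

theorem tendstoUniformlyOn_smul_comp_mul {f : ℝ → E} (hf : ContinuousOn f (Ici 0))
    (hlim : Tendsto f atTop (𝓝 0)) :
    TendstoUniformlyOn (fun c x => c • f (c * x)) f (𝓝 1) (Ici 0) := by
  rw [Metric.tendstoUniformlyOn_iff]
  intro ε hε
  obtain ⟨X, hX⟩ := eventually_atTop.1
    ((hlim.eventually (Metric.ball_mem_nhds 0 (by positivity : 0 < ε / 4))).and
      (eventually_ge_atTop 0))
  have hX0 : 0 ≤ X := (hX X le_rfl).2
  have hU : Icc (1 / 2 : ℝ) 2 ∈ 𝓝 1 := Icc_mem_nhds (by norm_num) (by norm_num)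
  have hcont : ContinuousOn (↿fun c x => c • f (c * x)) (Icc (1 / 2 : ℝ) 2 ×ˢ Icc 0 (2 * X)) :=
    continuous_fst.continuousOn.smul <| hf.comp (continuous_fst.mul continuous_snd).continuousOn
      fun p hp => mul_nonneg (by linarith [hp.1.1]) hp.2.1
  have hcompact : TendstoUniformlyOn (fun c x => c • f (c * x)) f (𝓝 1) (Icc 0 (2 * X)) := by
    have h := ((isCompact_Icc.prod isCompact_Icc).uniformContinuousOn_of_continuous
      hcont).tendstoUniformlyOn (show (1 : ℝ) ∈ Icc (1 / 2) 2 by norm_num)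
    simpa only [one_smul, one_mul, nhdsWithin_eq_nhds.2 hU] using h
  filter_upwards [Metric.tendstoUniformlyOn_iff.1 hcompact ε hε, hU] with c hnear hc x hx
  rcases le_total x (2 * X) with hxX | hXx
  · exact hnear x ⟨hx, hxX⟩
  have hx_small := (hX x (by linarith)).1
  have hcx_small := (hX (c * x) (by nlinarith [hc.1])).1
  rw [dist_zero_right] at hx_small hcx_small
  calc dist (f x) (c • f (c * x)) ≤ ‖f x‖ + ‖c • f (c * x)‖ := dist_le_norm_add_norm _ _
    _ ≤ ε / 4 + 2 * (ε / 4) := by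
      rw [norm_smul, Real.norm_of_nonneg (by linarith [hc.1])]
      gcongr
      exact hc.2
    _ < ε := by linarith

theorem tendstoUniformlyOn_smul_comp_smul {V : Type*} [NormedAddCommGroup V] [NormedSpace ℝ V]
    {F : V → E} {K : Set V} (hK : IsCompact K) (hKstar : StarConvex ℝ 0 K)
    (hF : ContinuousOn F K) :
    TendstoUniformlyOn (fun (t : ℝ) s => t • F (t • s)) F (𝓝[≤] 1) K := by
  have hcont : ContinuousOn (↿fun t s => t • F (t • s)) (Icc (0 : ℝ) 1 ×ˢ K) :=
    continuous_fst.continuousOn.smul <| hF.comp (continuous_fst.smul continuous_snd).continuousOn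
      fun p hp => starConvex_zero_iff.1 hKstar hp.2 hp.1.1 hp.1.2
  have h := ((isCompact_Icc.prod hK).uniformContinuousOn_of_continuous hcont).tendstoUniformlyOn
    (right_mem_Icc.2 zero_le_one)
  simpa only [one_smul, nhdsWithin_Icc_eq_nhdsLE zero_lt_one] using h

end Dilation

theorem tendsto_one_add_nhdsGT_zero : Tendsto (fun lam : ℝ => 1 + lam) (𝓝[>] 0) (𝓝 1) :=
  ((continuous_const_add 1).tendsto' 0 1 (add_zero 1)).mono_left nhdsWithin_le_nhds

theorem tendsto_inv_one_add_nhdsGT_zero :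
    Tendsto (fun lam : ℝ => (1 + lam)⁻¹) (𝓝[>] 0) (𝓝[≤] 1) := by
  refine tendsto_nhdsWithin_iff.2 ⟨by simpa using tendsto_one_add_nhdsGT_zero.inv₀ one_ne_zero, ?_⟩
  filter_upwards [self_mem_nhdsWithin] with lam (hlam : 0 < lam)
  exact inv_le_one_of_one_le₀ (le_add_of_nonneg_right hlam.le)

/-- Step 1 in the proof that `Y` is dense in `V⁰_{α,r}`: for `τ ∈ V_{α,r}` with
`τ(0) = τ'(0) = 0` and extension `F`, and every `ε > 0`, the dilates
`g(x) = τ((1+λ)x)` for all sufficiently small `λ > 0` are `C¹` with `g'(x) → 0`,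
`g(0) = g'(0) = 0`, have Laplace transform extending analytically to an open
neighborhood `Ω` of `R̄_{α,r}`, and satisfy `‖τ - g‖_{α,r} ≤ ε`. -/
theorem step1_dilation_approximation
    (α r : ℝ) (hα : α < 0) (hr : 0 < r)
    (τ τ' : ℝ → ℂ) (F : ℂ → ℂ)
    (hder : ∀ x ∈ Set.Ici (0 : ℝ), HasDerivWithinAt τ (τ' x) (Set.Ici 0) x)
    (hcont : ContinuousOn τ' (Set.Ici 0))
    (hto0 : Tendsto τ' atTop (nhds 0))
    (hτ0 : τ 0 = 0) (hτ'0 : τ' 0 = 0)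
    (hFan : DifferentiableOn ℂ F (Ropen α r))
    (hFcont : ContinuousOn F (Rbar α r))
    (hFeq : ∀ s ∈ Rbar α r, 0 < s.re → F s = Laplace τ s)
    (ε : ℝ) (hε : 0 < ε) :
    ∃ lam₀ : ℝ, 0 < lam₀ ∧ ∀ lam : ℝ, 0 < lam → lam < lam₀ →
      ∃ (g' : ℝ → ℂ) (Ω : Set ℂ) (G : ℂ → ℂ),
        (∀ x ∈ Set.Ici (0 : ℝ),
          HasDerivWithinAt (fun y : ℝ => τ ((1 + lam) * y)) (g' x) (Set.Ici 0) x) ∧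
        ContinuousOn g' (Set.Ici 0) ∧
        Tendsto g' atTop (nhds 0) ∧
        τ ((1 + lam) * 0) = 0 ∧ g' 0 = 0 ∧
        IsOpen Ω ∧ Rbar α r ⊆ Ω ∧
        DifferentiableOn ℂ G Ω ∧
        (∀ s ∈ Ω, 0 < s.re → G s = Laplace (fun y : ℝ => τ ((1 + lam) * y)) s) ∧
        ∃ ε₁ ε₂ : ℝ, 0 ≤ ε₁ ∧ 0 ≤ ε₂ ∧ ε₁ + ε₂ ≤ ε ∧
          (∀ x : ℝ, 0 ≤ x → ‖τ' x - g' x‖ ≤ ε₁) ∧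
          (∀ s ∈ Rbar α r, ‖F s - G s‖ ≤ ε₂) := by
  have hτ'near := tendsto_one_add_nhdsGT_zero.eventually <| Metric.tendstoUniformlyOn_iff.1
    (tendstoUniformlyOn_smul_comp_mul hcont hto0) (ε / 2) (half_pos hε)
  have hFnear := tendsto_inv_one_add_nhdsGT_zero.eventually <| Metric.tendstoUniformlyOn_iff.1
    (tendstoUniformlyOn_smul_comp_smul (isCompact_Rbar α r) (starConvex_Rbar hα.le) hFcont)
    (ε / 2) (half_pos hε)
  obtain ⟨lam₀, hlam₀, hnear⟩ := mem_nhdsGT_iff_exists_Ioo_subset.1 (hτ'near.and hFnear)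
  refine ⟨lam₀, hlam₀, fun lam hlam hlam_lt => ?_⟩
  obtain ⟨hτ'bound, hFbound⟩ := hnear ⟨hlam, hlam_lt⟩
  set c : ℝ := 1 + lam
  have hc_pos : 0 < c := by positivity
  have hcinv_lt : c⁻¹ < 1 := inv_lt_one_of_one_lt₀ (lt_add_of_pos_right 1 hlam)
  refine ⟨fun x => c • τ' (c * x), (fun s : ℂ => c⁻¹ • s) ⁻¹' Ropen α r,
    fun s => c⁻¹ • F (c⁻¹ • s), ?_, ?_, ?_, by simp [hτ0], by simp [hτ'0],
    (isOpen_Ropen α r).preimage (continuous_const_smul _),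
    fun s hs => smul_mem_Ropen_of_mem_Rbar hα hr (by positivity) hcinv_lt hs, ?_, ?_,
    ε / 2, ε / 2, by positivity, by positivity, by linarith,
    fun x hx => (dist_eq_norm _ _).symm.trans_le (hτ'bound x hx).le,
    fun s hs => (dist_eq_norm _ _).symm.trans_le (hFbound s hs).le⟩
  · exact fun x hx => (hder _ (mul_nonneg hc_pos.le hx)).comp_const_mul_Ici hc_pos.le
  · exact (hcont.comp (continuous_const_mul c).continuousOn
      fun x (hx : 0 ≤ x) => mul_nonneg hc_pos.le hx).const_smul c
  · simpa using (hto0.comp (tendsto_id.const_mul_atTop hc_pos)).const_smul c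
  · exact (hFan.comp (differentiable_id.const_smul c⁻¹).differentiableOn
      fun _ hs => hs).const_smul c⁻¹
  · intro s hs hre
    have hre' : 0 < (c⁻¹ • s).re := by rw [Complex.smul_re, smul_eq_mul]; positivity
    show c⁻¹ • F (c⁻¹ • s) = _
    rw [laplace_comp_mul τ hc_pos, hFeq _ (Ropen_subset_Rbar α r hs) hre']
end

section
/- Let ρ : [0,∞) → (0,∞) be a function with ρ(x) → 0 as x → ∞. Then there exist L ∈ C¹[0,∞) and an angle ϑ ∈ (0, π/2) such that lim_{x→∞} L(x) = lim_{x→∞} L'(x) = 0, ρ(x) = o(L(x)) as x → ∞, and L{L;·} has an analytic extension to the open sector {s ∈ ℂ \ {0} : −π + ϑ < arg s < π − ϑ}. -/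
open Filter Set MeasureTheory Asymptotics

/-!
Choose `1 ≤ x₀ ≤ x₁ ≤ ⋯ → ∞` with `|ρ| ≤ 4⁻ⁿ` on `[xₙ, ∞)` and put
`L(y) = ∑ₙ 2⁻ⁿ exp (-y / xₙ₊₁)`. On `[xₙ, xₙ₊₁]` the `n`-th term alone gives
`L ≥ 2⁻ⁿ / e`, so `|ρ| / L ≤ e 2⁻ⁿ` there, whence `ρ = o(L)`. Termwise, the Laplace transform
of `L` is `∑ₙ 2⁻ⁿ / (s + 1 / xₙ₊₁)`: its poles lie on the negative real axis and its residues
are summable, so it is holomorphic on the slit plane, which contains every sector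
`|arg s| < π - ϑ`.
-/

open Topology

theorem exists_le_lt_succ_of_tendsto_atTop {α : Type*} [LinearOrder α] [NoMaxOrder α]
    {x : ℕ → α} (hx : Tendsto x atTop atTop) {y : α} (hy : x 0 ≤ y) :
    ∃ n, x n ≤ y ∧ y < x (n + 1) := by
  classical
  have h : ∃ k, y < x (k + 1) :=
    ((hx.comp (tendsto_add_atTop_nat 1)).eventually_gt_atTop y).exists
  refine ⟨Nat.find h, ?_, Nat.find_spec h⟩
  rcases hn : Nat.find h with _ | m
  · exact hy
  · exact not_lt.1 (Nat.find_min h (by omega))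

theorem exists_monotone_forall_ge_of_eventually {P : ℕ → ℝ → Prop}
    (hP : ∀ n, ∀ᶠ y in atTop, P n y) :
    ∃ x : ℕ → ℝ, Monotone x ∧ (∀ n : ℕ, (n : ℝ) + 1 ≤ x n) ∧ ∀ n, ∀ y ≥ x n, P n y := by
  choose X hX using fun n => eventually_atTop.1 (hP n)
  let f : ℕ → ℝ := fun n => max (X n) (n + 1)
  exact ⟨partialSups f, (partialSups f).monotone,
    fun n => (le_max_right _ _).trans (le_partialSups f n),
    fun n y hy => hX n y ((le_max_left _ _).trans ((le_partialSups f n).trans hy))⟩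

theorem differentiableOn_tsum_div_add {a b : ℕ → ℂ} {U : Set ℂ}
    (ha : Summable fun n => ‖a n‖) (hU : IsOpen U) (hb : ∀ n, -b n ∉ U) :
    DifferentiableOn ℂ (fun s => ∑' n, a n / (s + b n)) U := by
  refine differentiableOn_of_locally_differentiableOn fun z hz => ?_
  obtain ⟨δ, hδ, hball⟩ := Metric.isOpen_iff.1 hU z hz
  have hδ2 : 0 < δ / 2 := half_pos hδ
  have hpole : ∀ n, ∀ w ∈ Metric.ball z (δ / 2), δ / 2 ≤ ‖w + b n‖ := by
    intro n w hw
    have hfar : δ ≤ dist (-b n) z := not_lt.1 fun h => hb n (hball h)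
    have hw' : dist w z < δ / 2 := hw
    have hnorm : ‖w + b n‖ = dist w (-b n) := by rw [dist_eq_norm, sub_neg_eq_add]
    linarith [dist_triangle_left (-b n) z w]
  refine ⟨Metric.ball z (δ / 2), Metric.isOpen_ball, Metric.mem_ball_self hδ2, ?_⟩
  refine (Complex.differentiableOn_tsum_of_summable_norm (ha.mul_right (δ / 2)⁻¹)
    (fun n => ?_) Metric.isOpen_ball fun n w hw => ?_).mono inter_subset_right
  · exact (differentiableOn_const _).div (differentiableOn_id.add_const _)
      fun w hw => norm_pos_iff.1 (hδ2.trans_le (hpole n w hw))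
  · rw [norm_div, div_eq_mul_inv]
    gcongr
    exact hpole n w hw

noncomputable def expSum (a b : ℕ → ℝ) (y : ℝ) : ℝ :=
  ∑' n, a n * Real.exp (-(b n * y))

theorem norm_mul_exp_neg_mul_le {a b y : ℝ} (ha : 0 ≤ a) (hb : 0 ≤ b) (hy : 0 ≤ y) :
    ‖a * Real.exp (-(b * y))‖ ≤ a := by
  rw [norm_mul, Real.norm_of_nonneg ha, Real.norm_of_nonneg (Real.exp_pos _).le]
  exact mul_le_of_le_one_right ha (Real.exp_le_one_iff.2 (neg_nonpos.2 (mul_nonneg hb hy)))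

section expSum

variable {a b : ℕ → ℝ}

theorem summable_mul_of_le_one (ha : Summable a) (ha0 : ∀ n, 0 ≤ a n) (hb0 : ∀ n, 0 ≤ b n)
    (hb1 : ∀ n, b n ≤ 1) : Summable fun n => a n * b n :=
  ha.of_nonneg_of_le (fun n => mul_nonneg (ha0 n) (hb0 n))
    fun n => mul_le_of_le_one_right (ha0 n) (hb1 n)

theorem summable_mul_exp_neg_mul (ha : Summable a) (ha0 : ∀ n, 0 ≤ a n) (hb : ∀ n, 0 ≤ b n)
    {y : ℝ} (hy : 0 ≤ y) : Summable fun n => a n * Real.exp (-(b n * y)) :=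
  ha.of_norm_bounded fun n => norm_mul_exp_neg_mul_le (ha0 n) (hb n) hy

theorem mul_exp_neg_mul_le_expSum (ha : Summable a) (ha0 : ∀ n, 0 ≤ a n) (hb : ∀ n, 0 ≤ b n)
    {y : ℝ} (hy : 0 ≤ y) (n : ℕ) : a n * Real.exp (-(b n * y)) ≤ expSum a b y :=
  (summable_mul_exp_neg_mul ha ha0 hb hy).le_tsum n
    fun m _ => mul_nonneg (ha0 m) (Real.exp_pos _).le

theorem continuousOn_expSum (ha : Summable a) (ha0 : ∀ n, 0 ≤ a n) (hb : ∀ n, 0 ≤ b n) :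
    ContinuousOn (expSum a b) (Ici 0) :=
  continuousOn_tsum (fun n => by fun_prop) ha
    fun n _ hy => norm_mul_exp_neg_mul_le (ha0 n) (hb n) hy

theorem tendsto_expSum_atTop (ha : Summable a) (ha0 : ∀ n, 0 ≤ a n) (hb : ∀ n, 0 < b n) :
    Tendsto (expSum a b) atTop (𝓝 0) := by
  have hterm : ∀ n, Tendsto (fun y => a n * Real.exp (-(b n * y))) atTop (𝓝 0) := fun n => by
    simpa using (Real.tendsto_exp_atBot.comp
      (tendsto_neg_atTop_atBot.comp (tendsto_id.const_mul_atTop (hb n)))).const_mul (a n)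
  unfold expSum
  simpa using tendsto_tsum_of_dominated_convergence ha hterm
    (by filter_upwards [eventually_ge_atTop 0] with y hy n using
      norm_mul_exp_neg_mul_le (ha0 n) (hb n).le hy)

theorem hasDerivAt_expSum (ha : Summable a) (ha0 : ∀ n, 0 ≤ a n) (hb0 : ∀ n, 0 ≤ b n)
    (hb1 : ∀ n, b n ≤ 1) {y : ℝ} (hy : -1 < y) :
    HasDerivAt (expSum a b) (-expSum (fun n => a n * b n) b y) y := by
  have hderiv : ∀ n z, z ∈ Ioi (-1 : ℝ) → HasDerivAt (fun z => a n * Real.exp (-(b n * z)))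
      (-(a n * b n * Real.exp (-(b n * z)))) z := fun n z _ => by
    refine ((((hasDerivAt_id' z).const_mul (b n)).fun_neg.exp).const_mul (a n)).congr_deriv ?_
    ring
  have hbound : ∀ n z, z ∈ Ioi (-1 : ℝ) →
      ‖-(a n * b n * Real.exp (-(b n * z)))‖ ≤ a n * b n * Real.exp 1 := fun n z hz => by
    have hab : 0 ≤ a n * b n := mul_nonneg (ha0 n) (hb0 n)
    rw [norm_neg, Real.norm_of_nonneg (by positivity)]
    gcongr
    nlinarith [hb0 n, hb1 n, mem_Ioi.1 hz]
  unfold expSum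
  rw [← tsum_neg]
  exact hasDerivAt_tsum_of_isPreconnected
    ((summable_mul_of_le_one ha ha0 hb0 hb1).mul_right _) isOpen_Ioi isPreconnected_Ioi
    hderiv hbound (y₀ := 0) (by norm_num) (by simpa using ha) hy

theorem laplace_expSum (ha : Summable a) (ha0 : ∀ n, 0 ≤ a n) (hb : ∀ n, 0 ≤ b n)
    {s : ℂ} (hs : 0 < s.re) :
    Laplace (fun y => (expSum a b y : ℂ)) s = ∑' n, (a n : ℂ) / (s + b n) := by
  set F : ℕ → ℝ → ℂ := fun n y => a n * Complex.exp (-(s + b n) * y)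
  have hre : ∀ n, 0 < s.re + b n := fun n => by linarith [hb n]
  have hre' : ∀ n, (-(s + b n)).re < 0 := fun n => by
    simp only [Complex.neg_re, Complex.add_re, Complex.ofReal_re]
    linarith [hre n]
  have hF_int : ∀ n, IntegrableOn (F n) (Ioi 0) := fun n =>
    (integrableOn_exp_mul_complex_Ioi (hre' n) 0).const_mul _
  have hF : ∀ n, ∫ y in Ioi 0, F n y = a n / (s + b n) := fun n => by
    have hne : s + b n ≠ 0 := fun h => by simpa [h] using hre' n
    simp only [F, integral_const_mul, integral_exp_mul_complex_Ioi (hre' n)]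
    field_simp
    simp
  have hF_norm : ∀ n, ∫ y in Ioi 0, ‖F n y‖ = a n / (s.re + b n) := fun n => by
    have : ∀ y : ℝ, ‖F n y‖ = a n * Real.exp (-(s.re + b n) * y) := fun y => by
      simp [F, Complex.norm_exp, Real.norm_of_nonneg (ha0 n)]
    simp only [this, integral_const_mul, integral_exp_mul_Ioi (neg_lt_zero.2 (hre n))]
    field_simp
    simp
  have hsum : Summable fun n => ∫ y in Ioi 0, ‖F n y‖ := by
    simp only [hF_norm]
    exact (ha.div_const s.re).of_nonneg_of_le (fun n => div_nonneg (ha0 n) (hre n).le)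
      fun n => div_le_div_of_nonneg_left (ha0 n) hs (by linarith [hb n])
  calc Laplace (fun y => (expSum a b y : ℂ)) s = ∫ y in Ioi 0, ∑' n, F n y := by
        refine setIntegral_congr_fun measurableSet_Ioi fun y _ => ?_
        dsimp only
        rw [expSum, Complex.ofReal_tsum, ← tsum_mul_right]
        refine tsum_congr fun n => ?_
        push_cast
        rw [mul_assoc, ← Complex.exp_add]
        congr 2
        ring
    _ = ∑' n, ∫ y in Ioi 0, F n y := (integral_tsum_of_summable_integral_norm hF_int hsum).symm
    _ = ∑' n, (a n : ℂ) / (s + b n) := tsum_congr hF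

end expSum

theorem isLittleO_expSum {ρ : ℝ → ℝ} {x : ℕ → ℝ} (hx : Monotone x)
    (hx_top : Tendsto x atTop atTop) (hx0 : 0 < x 0)
    (hρ : ∀ n, ∀ y ≥ x n, |ρ y| ≤ (1 / 4 : ℝ) ^ n) :
    ρ =o[atTop] expSum (fun n => (1 / 2 : ℝ) ^ n) fun n => (x (n + 1))⁻¹ := by
  set L := expSum (fun n => (1 / 2 : ℝ) ^ n) fun n => (x (n + 1))⁻¹
  have hxpos : ∀ n, 0 < x n := fun n => hx0.trans_le (hx (Nat.zero_le n))
  have hlow : ∀ n, ∀ y ∈ Icc (x n) (x (n + 1)), (1 / 2 : ℝ) ^ n ≤ Real.exp 1 * L y := by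
    rintro n y ⟨hny, hyn⟩
    have hy : 0 ≤ y := (hxpos n).le.trans hny
    have hterm := mul_exp_neg_mul_le_expSum summable_geometric_two
      (fun n => by positivity) (fun n => (inv_pos.2 (hxpos (n + 1))).le) hy n
    have hexp : Real.exp (-1) ≤ Real.exp (-((x (n + 1))⁻¹ * y)) :=
      Real.exp_le_exp.2 (neg_le_neg ((inv_mul_le_one₀ (hxpos (n + 1))).2 hyn))
    calc (1 / 2 : ℝ) ^ n = Real.exp 1 * ((1 / 2) ^ n * Real.exp (-1)) := by
          rw [Real.exp_neg]; field_simp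
      _ ≤ Real.exp 1 * ((1 / 2) ^ n * Real.exp (-((x (n + 1))⁻¹ * y))) := by gcongr
      _ ≤ Real.exp 1 * L y := by gcongr
  rw [isLittleO_iff]
  intro c hc
  obtain ⟨N, hN⟩ : ∃ N, (1 / 2 : ℝ) ^ N * Real.exp 1 ≤ c := by
    have h := (tendsto_pow_atTop_nhds_zero_of_lt_one (by norm_num)
      (by norm_num : (1 / 2 : ℝ) < 1)).mul_const (Real.exp 1)
    rw [zero_mul] at h
    exact (h.eventually (ge_mem_nhds hc)).exists
  filter_upwards [eventually_ge_atTop (x N)] with y hy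
  obtain ⟨n, hny, hyn⟩ :=
    exists_le_lt_succ_of_tendsto_atTop hx_top ((hx (Nat.zero_le N)).trans hy)
  have hNn : N ≤ n := Nat.lt_succ_iff.1 (hx.reflect_lt (hy.trans_lt hyn))
  have hL := hlow n y ⟨hny, hyn.le⟩
  have hL0 : 0 ≤ L y := nonneg_of_mul_nonneg_right ((by positivity : (0 : ℝ) ≤ _).trans hL)
    (Real.exp_pos 1)
  calc ‖ρ y‖ ≤ (1 / 4 : ℝ) ^ n := hρ n y hny
    _ = (1 / 2) ^ n * (1 / 2) ^ n := by rw [← mul_pow]; norm_num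
    _ ≤ (1 / 2) ^ N * (Real.exp 1 * L y) :=
        mul_le_mul (pow_le_pow_of_le_one (by norm_num) (by norm_num) hNn) hL (by positivity)
          (by positivity)
    _ = ((1 / 2) ^ N * Real.exp 1) * L y := by ring
    _ ≤ c * ‖L y‖ := by rw [Real.norm_of_nonneg hL0]; gcongr

theorem sector_subset_slitPlane {ϑ : ℝ} (hϑ : 0 < ϑ) :
    {s : ℂ | s ≠ 0 ∧ -(Real.pi - ϑ) < s.arg ∧ s.arg < Real.pi - ϑ} ⊆ Complex.slitPlane :=
  fun _ ⟨hs0, _, hs⟩ => Complex.mem_slitPlane_iff_arg.2 ⟨by linarith, hs0⟩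

theorem majorant_with_sector_extension_general
    (ρ : ℝ → ℝ)
    (hρ0 : Tendsto ρ atTop (nhds 0)) :
    ∃ (L L' : ℝ → ℝ) (ϑ : ℝ),
      (∀ x ∈ Set.Ici (0 : ℝ), HasDerivWithinAt L (L' x) (Set.Ici 0) x) ∧
      ContinuousOn L' (Set.Ici 0) ∧
      Tendsto L atTop (nhds 0) ∧
      Tendsto L' atTop (nhds 0) ∧
      ρ =o[atTop] L ∧
      0 < ϑ ∧ ϑ < Real.pi / 2 ∧
      ∃ F : ℂ → ℂ,
        DifferentiableOn ℂ F
          {s : ℂ | s ≠ 0 ∧ -(Real.pi - ϑ) < s.arg ∧ s.arg < Real.pi - ϑ} ∧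
        ∀ s : ℂ, 0 < s.re → F s = Laplace (fun x : ℝ => ((L x : ℝ) : ℂ)) s := by
  have hsmall : ∀ n : ℕ, ∀ᶠ y in atTop, |ρ y| ≤ (1 / 4 : ℝ) ^ n := fun n =>
    hρ0.abs.eventually (ge_mem_nhds (by rw [abs_zero]; positivity))
  obtain ⟨x, hx, hx_ge, hρx⟩ := exists_monotone_forall_ge_of_eventually hsmall
  set a : ℕ → ℝ := fun n => (1 / 2) ^ n
  set b : ℕ → ℝ := fun n => (x (n + 1))⁻¹
  have ha0 : ∀ n, 0 ≤ a n := fun n => by positivity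
  have hb0 : ∀ n, 0 < b n := fun n => inv_pos.2 (by linarith [hx_ge (n + 1)])
  have hb0' : ∀ n, 0 ≤ b n := fun n => (hb0 n).le
  have hb1 : ∀ n, b n ≤ 1 := fun n => inv_le_one_of_one_le₀ (by linarith [hx_ge (n + 1)])
  have hab := summable_mul_of_le_one summable_geometric_two ha0 hb0' hb1
  have hab0 : ∀ n, 0 ≤ a n * b n := fun n => mul_nonneg (ha0 n) (hb0' n)
  have hx_top : Tendsto x atTop atTop :=
    tendsto_atTop_mono (fun n => (lt_add_one _).le.trans (hx_ge n)) tendsto_natCast_atTop_atTop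
  refine ⟨expSum a b, fun y => -expSum (fun n => a n * b n) b y, Real.pi / 4,
    fun y hy => (hasDerivAt_expSum summable_geometric_two ha0 hb0' hb1
      (by linarith [mem_Ici.1 hy])).hasDerivWithinAt,
    (continuousOn_expSum hab hab0 hb0').neg,
    tendsto_expSum_atTop summable_geometric_two ha0 hb0,
    by simpa only [neg_zero] using (tendsto_expSum_atTop hab hab0 hb0).neg,
    isLittleO_expSum hx hx_top (by linarith [hx_ge 0]) hρx,
    by positivity, by linarith [Real.pi_pos],
    fun s => ∑' n, (a n : ℂ) / (s + b n), ?_,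
    fun s hs => (laplace_expSum summable_geometric_two ha0 hb0' hs).symm⟩
  refine (differentiableOn_tsum_div_add ?_ Complex.isOpen_slitPlane fun n => ?_).mono
    (sector_subset_slitPlane (by positivity))
  · simpa [a] using summable_geometric_two
  · simp [Complex.mem_slitPlane_iff, hb0' n]

/-- Majorization lemma: for any positive `ρ` with `ρ(x) → 0` there exist
`L ∈ C¹[0,∞)` with `L(x) → 0`, `L'(x) → 0`, `ρ(x) = o(L(x))`, and an angle
`ϑ ∈ (0, π/2)` such that `L{L;·}` has an analytic extension to the sector
`{s ≠ 0 : −π + ϑ < arg s < π − ϑ}`. -/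
theorem majorant_with_sector_extension
    (ρ : ℝ → ℝ) (hρpos : ∀ x : ℝ, 0 ≤ x → 0 < ρ x)
    (hρ0 : Tendsto ρ atTop (nhds 0)) :
    ∃ (L L' : ℝ → ℝ) (ϑ : ℝ),
      (∀ x ∈ Set.Ici (0 : ℝ), HasDerivWithinAt L (L' x) (Set.Ici 0) x) ∧
      ContinuousOn L' (Set.Ici 0) ∧
      Tendsto L atTop (nhds 0) ∧
      Tendsto L' atTop (nhds 0) ∧
      ρ =o[atTop] L ∧
      0 < ϑ ∧ ϑ < Real.pi / 2 ∧
      ∃ F : ℂ → ℂ,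
        DifferentiableOn ℂ F
          {s : ℂ | s ≠ 0 ∧ -(Real.pi - ϑ) < s.arg ∧ s.arg < Real.pi - ϑ} ∧
        ∀ s : ℂ, 0 < s.re → F s = Laplace (fun x : ℝ => ((L x : ℝ) : ℂ)) s :=
  majorant_with_sector_extension_general ρ hρ0
end
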